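/- Fix κ ≥ 0. If A ∈ C²(ℝ, M²) satisfies det A(t) = 1 for all t and solves Ä(t) + κA(t) = λ(t)·cof A(t) for some λ ∈ C⁰(ℝ,ℝ), then λ(t) = (4X₁ + 2X₂² − 2X₃²)/|A(t)|⁴ for all t ∈ ℝ, where Xᵢ = Xᵢ(A(0), Ȧ(0)) for i = 1,2,3. -/

import Mathlib

open Matrix

noncomputable section

/-- `M²`: the space of 2×2 real matrices. -/
abbrev M2 : Type := Matrix (Fin 2) (Fin 2) ℝ

/-- Frobenius inner product `⟨A,B⟩ = tr(AᵀB)`. -/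
def mip (A B : M2) : ℝ := (Aᵀ * B).trace

/-- Frobenius norm `|A| = ⟨A,A⟩^{1/2}`. -/
def fnorm (A : M2) : ℝ := Real.sqrt (mip A A)

/-- The matrix Z = [[0,−1],[1,0]]. -/
def Zm : M2 := !![0, -1; 1, 0]

/-- The matrix K = [[1,0],[0,−1]]. -/
def Km : M2 := !![1, 0; 0, -1]

/-- The matrix M = [[0,1],[1,0]]. -/
def Mm : M2 := !![0, 1; 1, 0]

/-- Cofactor: cof [[a,b],[c,d]] = [[d,−c],[−b,a]]. -/
def cofm (A : M2) : M2 := !![A 1 1, -(A 1 0); -(A 0 1), A 0 0]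

/-- Membership in SO(2,ℝ). -/
def isSO (U : M2) : Prop := U.det = 1 ∧ U⁻¹ = Uᵀ

/-- The rotation U(θ) = cos θ·I + sin θ·Z. -/
def Um (θ : ℝ) : M2 := Real.cos θ • (1 : M2) + Real.sin θ • Zm

/-- Invariant X₁(A,B) = ½|B|² + (κ/2)|A|². -/
def X1 (κ : ℝ) (A B : M2) : ℝ := (1/2) * mip B B + (κ/2) * mip A A

/-- Invariant X₂(A,B) = ½⟨ZA − AZ, B⟩. -/
def X2 (A B : M2) : ℝ := (1/2) * mip (Zm * A - A * Zm) B

/-- Invariant X₃(A,B) = ½⟨ZA + AZ, B⟩. -/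
def X3 (A B : M2) : ℝ := (1/2) * mip (Zm * A + A * Zm) B

/-- Lagrange multiplier Λ(A,B) = 2(κ − det B)/|A|². -/
def Lam (κ : ℝ) (A B : M2) : ℝ := 2 * (κ - B.det) / (mip A A)

attribute [local instance] Matrix.normedAddCommGroup Matrix.normedSpace

/-! Pairing the equation with `cof A` and using `(det A)¨ = 0` gives `λ |A|² = 2 (κ - det Ȧ)`.
Pairing it with `cof Ȧ` shows that `(κ - det Ȧ) |A|²` is conserved, so
`λ |A|⁴ = 2 (κ - det Ȧ(0)) |A(0)|²`; at `t = 0` the constraints `det A = 1` and `⟨cof A, Ȧ⟩ = 0`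
turn the right-hand side into `4X₁ + 2X₂² - 2X₃²`. -/

lemma mip_apply (A B : M2) :
    mip A B = A 0 0 * B 0 0 + A 0 1 * B 0 1 + A 1 0 * B 1 0 + A 1 1 * B 1 1 := by
  simp [mip, Matrix.trace_fin_two, Matrix.mul_apply, Fin.sum_univ_two]
  ring

lemma mip_comm (A B : M2) : mip A B = mip B A := by
  simp only [mip_apply]; ring

lemma mip_sub_right (A B C : M2) : mip A (B - C) = mip A B - mip A C := by
  simp only [mip_apply, Matrix.sub_apply]; ring

lemma mip_smul_right (A B : M2) (c : ℝ) : mip A (c • B) = c * mip A B := by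
  simp only [mip_apply, Matrix.smul_apply, smul_eq_mul]; ring

lemma mip_cofm_cofm (A B : M2) : mip (cofm A) (cofm B) = mip A B := by
  simp [mip_apply, cofm]; ring

lemma mip_cofm_comm (A B : M2) : mip (cofm A) B = mip (cofm B) A := by
  simp [mip_apply, cofm]; ring

lemma mip_cofm_self (A : M2) : mip (cofm A) A = 2 * A.det := by
  simp [mip_apply, cofm, Matrix.det_fin_two]; ring

lemma two_mul_det_le_mip_self (A : M2) : 2 * A.det ≤ mip A A := by
  rw [mip_apply, Matrix.det_fin_two]
  nlinarith [sq_nonneg (A 0 0 - A 1 1), sq_nonneg (A 0 1 + A 1 0)]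

lemma four_mul_X1_add_two_mul_X2_sq_sub_two_mul_X3_sq (κ : ℝ) (A B : M2) :
    4 * X1 κ A B + 2 * X2 A B ^ 2 - 2 * X3 A B ^ 2 =
      2 * (κ - B.det) * mip A A + 2 * mip B B * (1 - A.det) + 2 * mip A B * mip (cofm A) B := by
  simp [X1, X2, X3, mip_apply, cofm, Zm, Matrix.det_fin_two, Matrix.mul_apply, Matrix.vecMul,
    dotProduct, Fin.sum_univ_two]
  ring

section Calculus

variable {f g : ℝ → M2} {f' g' : M2} {t : ℝ}

lemma HasDerivAt.matrix_apply (hf : HasDerivAt f f' t) (i j : Fin 2) :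
    HasDerivAt (fun s => f s i j) (f' i j) t :=
  hasDerivAt_pi.1 (hasDerivAt_pi.1 hf i) j

lemma HasDerivAt.fun_cofm (hf : HasDerivAt f f' t) :
    HasDerivAt (fun s => cofm (f s)) (cofm f') t := by
  refine hasDerivAt_pi.2 fun i => hasDerivAt_pi.2 fun j => ?_
  fin_cases i <;> fin_cases j
  · exact hf.matrix_apply 1 1
  · exact (hf.matrix_apply 1 0).neg
  · exact (hf.matrix_apply 0 1).neg
  · exact hf.matrix_apply 0 0

lemma HasDerivAt.fun_mip (hf : HasDerivAt f f' t) (hg : HasDerivAt g g' t) :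
    HasDerivAt (fun s => mip (f s) (g s)) (mip f' (g t) + mip (f t) g') t := by
  simp only [mip_apply]
  have h := ((((hf.matrix_apply 0 0).fun_mul (hg.matrix_apply 0 0)).fun_add
    ((hf.matrix_apply 0 1).fun_mul (hg.matrix_apply 0 1))).fun_add
    ((hf.matrix_apply 1 0).fun_mul (hg.matrix_apply 1 0))).fun_add
    ((hf.matrix_apply 1 1).fun_mul (hg.matrix_apply 1 1))
  exact h.congr_deriv (by ring)

lemma HasDerivAt.fun_det_fin_two (hf : HasDerivAt f f' t) :
    HasDerivAt (fun s => (f s).det) (mip (cofm (f t)) f') t := by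
  have h := (hf.fun_cofm.fun_mip hf).div_const 2
  rw [mip_cofm_comm f' (f t), add_self_div_two] at h
  simpa [mip_cofm_self] using h

end Calculus

section UnitDeterminantCurve

variable {κ : ℝ} {A A' A'' : ℝ → M2} {lam : ℝ → ℝ}

lemma mip_cofm_eq_zero_of_det_eq_one (hA : ∀ t, HasDerivAt A (A' t) t)
    (hdet : ∀ t, (A t).det = 1) (t : ℝ) : mip (cofm (A t)) (A' t) = 0 := by
  have h := (hA t).fun_det_fin_two
  simp only [hdet] at h
  exact h.unique (hasDerivAt_const t 1)

lemma two_mul_det_add_mip_cofm_eq_zero (hA : ∀ t, HasDerivAt A (A' t) t)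
    (hA' : ∀ t, HasDerivAt A' (A'' t) t) (hdet : ∀ t, (A t).det = 1) (t : ℝ) :
    2 * (A' t).det + mip (cofm (A t)) (A'' t) = 0 := by
  have h := (hA t).fun_cofm.fun_mip (hA' t)
  simp only [mip_cofm_eq_zero_of_det_eq_one hA hdet, mip_cofm_self] at h
  exact h.unique (hasDerivAt_const t 0)

lemma mul_mip_self_eq_two_mul_sub_det (hA : ∀ t, HasDerivAt A (A' t) t)
    (hA' : ∀ t, HasDerivAt A' (A'' t) t) (hdet : ∀ t, (A t).det = 1)
    (hode : ∀ t, A'' t + κ • A t = lam t • cofm (A t)) (t : ℝ) :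
    lam t * mip (A t) (A t) = 2 * (κ - (A' t).det) := by
  have h := two_mul_det_add_mip_cofm_eq_zero hA hA' hdet t
  rw [eq_sub_of_add_eq (hode t), mip_sub_right, mip_smul_right, mip_smul_right, mip_cofm_cofm,
    mip_cofm_self, hdet] at h
  linarith

lemma sub_det_mul_mip_self_eq (hA : ∀ t, HasDerivAt A (A' t) t)
    (hA' : ∀ t, HasDerivAt A' (A'' t) t) (hdet : ∀ t, (A t).det = 1)
    (hode : ∀ t, A'' t + κ • A t = lam t • cofm (A t)) (t : ℝ) :
    (κ - (A' t).det) * mip (A t) (A t) = (κ - (A' 0).det) * mip (A 0) (A 0) := by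
  have hF : ∀ s, HasDerivAt (fun u => (κ - (A' u).det) * mip (A u) (A u)) 0 s := by
    intro s
    have hacc : mip (cofm (A' s)) (A'' s) = lam s * mip (A s) (A' s) := by
      rw [eq_sub_of_add_eq (hode s), mip_sub_right, mip_smul_right, mip_smul_right, mip_cofm_cofm,
        mip_cofm_comm, mip_cofm_eq_zero_of_det_eq_one hA hdet, mip_comm]
      ring
    have h := ((hasDerivAt_const s κ).fun_sub (hA' s).fun_det_fin_two).fun_mul
      ((hA s).fun_mip (hA s))
    refine h.congr_deriv ?_
    rw [hacc, mip_comm (A' s)]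
    linear_combination (-mip (A s) (A' s)) * mul_mip_self_eq_two_mul_sub_det hA hA' hdet hode s
  exact is_const_of_deriv_eq_zero (fun s => (hF s).differentiableAt) (fun s => (hF s).deriv) t 0

end UnitDeterminantCurve

theorem lam_value_general (κ : ℝ) (A : ℝ → M2) (lam : ℝ → ℝ)
    (hA : ContDiff ℝ 2 A)
    (hdet : ∀ t : ℝ, (A t).det = 1)
    (hode : ∀ t : ℝ, deriv (deriv A) t + κ • A t = lam t • cofm (A t)) :
    ∀ t : ℝ, lam t = (4 * X1 κ (A 0) (deriv A 0) + 2 * X2 (A 0) (deriv A 0) ^ 2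
      - 2 * X3 (A 0) (deriv A 0) ^ 2) / (mip (A t) (A t)) ^ 2 := by
  have hA₁ : ∀ t, HasDerivAt A (deriv A t) t :=
    fun t => (hA.differentiable (by norm_num) t).hasDerivAt
  have hA₂ : ∀ t, HasDerivAt (deriv A) (deriv (deriv A) t) t :=
    fun t => (hA.differentiable_deriv_two t).hasDerivAt
  intro t
  have hpos : 0 < mip (A t) (A t) := by linarith [two_mul_det_le_mip_self (A t), hdet t]
  rw [four_mul_X1_add_two_mul_X2_sq_sub_two_mul_X3_sq, hdet 0,
    mip_cofm_eq_zero_of_det_eq_one hA₁ hdet 0, eq_div_iff (by positivity)]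
  linear_combination mip (A t) (A t) * mul_mip_self_eq_two_mul_sub_det hA₁ hA₂ hdet hode t
    + 2 * sub_det_mul_mip_self_eq hA₁ hA₂ hdet hode t

/-- the Lagrange multiplier in terms of the initial invariants. -/
theorem lam_value (κ : ℝ) (hκ : 0 ≤ κ) (A : ℝ → M2) (lam : ℝ → ℝ)
    (hA : ContDiff ℝ 2 A) (hlam : Continuous lam)
    (hdet : ∀ t : ℝ, (A t).det = 1)
    (hode : ∀ t : ℝ, deriv (deriv A) t + κ • A t = lam t • cofm (A t)) :
    ∀ t : ℝ, lam t = (4 * X1 κ (A 0) (deriv A 0) + 2 * X2 (A 0) (deriv A 0) ^ 2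
      - 2 * X3 (A 0) (deriv A 0) ^ 2) / (mip (A t) (A t)) ^ 2 :=
  lam_value_general κ A lam hA hdet hode
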